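/- Let x ∈ ℂ with x ≠ 0. Let V be a 4-dimensional ℂ-vector space and let f be an endomorphism of V whose matrix in some basis of V is diag(J(x,2), J(1,1), J(x⁻²,1)). Then there is a basis of the 6-dimensional space ⋀²V in which the induced endomorphism ⋀²f has matrix diag(J(x,2), J(x⁻¹,2), J(x²,1), J(x⁻²,1)). -/

import Mathlib

/-!
Let e₀, e₁ be the Jordan chain of `f` at `x` (so `f e₁ = e₀ + x • e₁`), e₂ the fixed vector and
e₃ the `x⁻²`-eigenvector. Then `⋀²f` acts on `(e₀∧e₂, e₁∧e₂)` by `J(x,2)`, on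
`(e₀∧e₃, x²·e₁∧e₃)` by `J(x⁻¹,2)` (the factor `x²` turns the superdiagonal entry `x⁻²` into `1`),
and multiplies `e₀∧e₁` by `x²` and `e₂∧e₃` by `x⁻²`. Up to the unit `x²` these six vectors are the
wedges `eᵢ∧eⱼ` with `i < j`, which are linearly independent, hence a basis of the 6-dimensional
space `⋀²V`.
-/

/-- The `n × n` Jordan block with eigenvalue `lam`: every diagonal entry is `lam` and every
entry directly above the diagonal is `1`. -/
def jordanBlock (lam : ℂ) (n : ℕ) : Matrix (Fin n) (Fin n) ℂ :=
  Matrix.of fun i j : Fin n =>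
    if (j : ℕ) = (i : ℕ) then lam else if (j : ℕ) = (i : ℕ) + 1 then 1 else 0

/-- The wedge `v ∧ w` as an element of the second exterior power `⋀[ℂ]^2 V`. -/
def wedge {V : Type*} [AddCommGroup V] [Module ℂ V] (v w : V) : ⋀[ℂ]^2 V :=
  ⟨ExteriorAlgebra.ι ℂ v * ExteriorAlgebra.ι ℂ w, by
    show _ ∈ LinearMap.range (ExteriorAlgebra.ι ℂ (M := V)) ^ 2
    rw [pow_two]
    exact Submodule.mul_mem_mul (LinearMap.mem_range_self _ v) (LinearMap.mem_range_self _ w)⟩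

open Module

namespace LinearMap

section

variable {R W ι κ : Type*} [CommSemiring R] [AddCommMonoid W] [Module R W] [Fintype ι]
  [Fintype κ] {g : W →ₗ[R] W}

def ActsByMatrix (g : W →ₗ[R] W) (v : ι → W) (A : Matrix ι ι R) : Prop :=
  ∀ j, g (v j) = ∑ i, A i j • v i

theorem toMatrix_eq_iff_actsByMatrix [DecidableEq ι] (C : Basis ι R W) (A : Matrix ι ι R) :
    toMatrix C C g = A ↔ g.ActsByMatrix C A := by
  rw [← (toMatrix C C).eq_symm_apply, toMatrix_symm]
  exact ⟨fun h j ↦ by rw [h, Matrix.toLin_self],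
    fun h ↦ C.ext fun j ↦ by rw [h, Matrix.toLin_self]⟩

theorem actsByMatrix_fromBlocks {v : ι ⊕ κ → W} {A : Matrix ι ι R} {D : Matrix κ κ R} :
    g.ActsByMatrix v (Matrix.fromBlocks A 0 0 D) ↔
      g.ActsByMatrix (v ∘ Sum.inl) A ∧ g.ActsByMatrix (v ∘ Sum.inr) D := by
  simp [ActsByMatrix, Fintype.sum_sum_type, Sum.forall]

end

section JordanBlock

variable {W : Type*} [AddCommMonoid W] [Module ℂ W] {g : W →ₗ[ℂ] W} {μ : ℂ}

theorem actsByMatrix_jordanBlock_one {v : Fin 1 → W} :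
    g.ActsByMatrix v (jordanBlock μ 1) ↔ g (v 0) = μ • v 0 := by
  simp [ActsByMatrix, jordanBlock, Fin.forall_fin_one]

theorem actsByMatrix_jordanBlock_two {v : Fin 2 → W} :
    g.ActsByMatrix v (jordanBlock μ 2) ↔ g (v 0) = μ • v 0 ∧ g (v 1) = v 0 + μ • v 1 := by
  simp [ActsByMatrix, jordanBlock, Fin.forall_fin_two, Fin.sum_univ_two]

end JordanBlock

end LinearMap

section Wedge

variable {V : Type*} [AddCommGroup V] [Module ℂ V]

theorem wedge_eq_ιMulti (v w : V) : wedge v w = exteriorPower.ιMulti ℂ 2 ![v, w] :=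
  Subtype.ext <| by simp [wedge, ExteriorAlgebra.ιMulti_apply]

theorem wedge_add_left (u v w : V) : wedge (u + v) w = wedge u w + wedge v w :=
  Subtype.ext <| by simp [wedge, add_mul]

theorem wedge_add_right (u v w : V) : wedge u (v + w) = wedge u v + wedge u w :=
  Subtype.ext <| by simp [wedge, mul_add]

theorem wedge_smul_left (c : ℂ) (v w : V) : wedge (c • v) w = c • wedge v w :=
  Subtype.ext <| by simp [wedge]

theorem wedge_smul_right (c : ℂ) (v w : V) : wedge v (c • w) = c • wedge v w :=
  Subtype.ext <| by simp [wedge]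

theorem wedge_self (v : V) : wedge v v = 0 :=
  Subtype.ext <| by simp [wedge]

theorem linearIndependent_smul_wedge {ι κ : Type*} [LinearOrder ι] {v : ι → V}
    (hv : LinearIndependent ℂ v) {p : κ → ι × ι} (hp : p.Injective) (hlt : ∀ k, (p k).1 < (p k).2)
    {c : κ → ℂ} (hc : ∀ k, c k ≠ 0) :
    LinearIndependent ℂ fun k ↦ c k • wedge (v (p k).1) (v (p k).2) := by
  let e (k : κ) : Fin 2 ↪o ι :=
    OrderEmbedding.ofStrictMono ![(p k).1, (p k).2] (Fin.strictMono_iff_lt_succ.2 fun i ↦ by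
      fin_cases i; exact hlt k)
  let s (k : κ) := Set.powersetCard.ofFinEmbEquiv (e k)
  have hs : s.Injective := by
    intro k l hkl
    have h := DFunLike.congr_fun (Set.powersetCard.ofFinEmbEquiv.injective hkl)
    exact hp (Prod.ext (h 0) (h 1))
  have hwedge (k : κ) :
      wedge (v (p k).1) (v (p k).2) = exteriorPower.ιMulti_family ℂ 2 v (s k) := by
    rw [exteriorPower.ιMulti_family, Equiv.symm_apply_apply, wedge_eq_ιMulti]
    congr 1
    ext i; fin_cases i <;> rfl
  simp_rw [hwedge]
  exact ((exteriorPower.ιMulti_family_linearIndependent_field 2 hv).comp s hs).units_smul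
    fun k ↦ Units.mk0 (c k) (hc k)

end Wedge

/-- Let `x ∈ ℂ` with `x ≠ 0`. If the matrix of the endomorphism `f` of the 4-dimensional ℂ-vector space `V` in some basis is diag(J(x,2), J(1,1), J(x⁻²,1)), then in some basis of the 6-dimensional space ⋀²V the induced endomorphism ⋀²f (characterized by `v ∧ w ↦ f v ∧ f w`) has matrix diag(J(x,2), J(x⁻¹,2), J(x²,1), J(x⁻²,1)). -/
theorem exterior_square_jordan_Jx2_J1_Jxm2 (V : Type*) [AddCommGroup V] [Module ℂ V]
    (hdim : Module.finrank ℂ V = 4)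
    (x : ℂ) (hx : x ≠ 0)
    (f : V →ₗ[ℂ] V)
    (B : Module.Basis (Fin 2 ⊕ (Fin 1 ⊕ Fin 1)) ℂ V)
    (hB : LinearMap.toMatrix B B f = Matrix.fromBlocks (jordanBlock x 2) 0 0 (Matrix.fromBlocks (jordanBlock 1 1) 0 0 (jordanBlock (x ^ 2)⁻¹ 1)))
    (g : (⋀[ℂ]^2 V) →ₗ[ℂ] (⋀[ℂ]^2 V))
    (hg : ∀ v w : V, g (wedge v w) = wedge (f v) (f w)) :
    ∃ C : Module.Basis (Fin 2 ⊕ (Fin 2 ⊕ (Fin 1 ⊕ Fin 1))) ℂ (⋀[ℂ]^2 V),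
      LinearMap.toMatrix C C g = Matrix.fromBlocks (jordanBlock x 2) 0 0 (Matrix.fromBlocks (jordanBlock x⁻¹ 2) 0 0 (Matrix.fromBlocks (jordanBlock (x ^ 2) 1) 0 0 (jordanBlock (x ^ 2)⁻¹ 1))) := by
  simp only [LinearMap.toMatrix_eq_iff_actsByMatrix, LinearMap.actsByMatrix_fromBlocks,
    LinearMap.actsByMatrix_jordanBlock_one, LinearMap.actsByMatrix_jordanBlock_two,
    Function.comp_apply] at hB
  obtain ⟨⟨hf0, hf1⟩, hf2, hf3⟩ := hB
  let e : Fin 4 → V := B ∘ ![.inl 0, .inl 1, .inr (.inl 0), .inr (.inr 0)]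
  have he : LinearIndependent ℂ e := B.linearIndependent.comp _ (by decide)
  let p : Fin 2 ⊕ (Fin 2 ⊕ (Fin 1 ⊕ Fin 1)) → Fin 4 × Fin 4 :=
    Sum.elim ![(0, 2), (1, 2)] (Sum.elim ![(0, 3), (1, 3)] (Sum.elim ![(0, 1)] ![(2, 3)]))
  let c : Fin 2 ⊕ (Fin 2 ⊕ (Fin 1 ⊕ Fin 1)) → ℂ := Sum.elim 1 (Sum.elim ![1, x ^ 2] 1)
  have hli := linearIndependent_smul_wedge he (p := p) (by decide) (by decide) (c := c)
    (by rintro (k | k | k | k) <;> fin_cases k <;> simp [c, hx])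
  have : Module.Finite ℂ V := .of_basis B
  have hcard :
      Fintype.card (Fin 2 ⊕ (Fin 2 ⊕ (Fin 1 ⊕ Fin 1))) = Module.finrank ℂ (⋀[ℂ]^2 V) := by
    rw [exteriorPower.finrank_eq, hdim]; rfl
  refine ⟨basisOfLinearIndependentOfCardEqFinrank hli hcard, ?_⟩
  simp only [LinearMap.toMatrix_eq_iff_actsByMatrix, coe_basisOfLinearIndependentOfCardEqFinrank,
    LinearMap.actsByMatrix_fromBlocks, LinearMap.actsByMatrix_jordanBlock_one,
    LinearMap.actsByMatrix_jordanBlock_two, Function.comp_apply, Sum.elim_inl, Sum.elim_inr,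
    Matrix.cons_val_zero, Matrix.cons_val_one, Matrix.cons_val_fin_one, Matrix.cons_val,
    Pi.one_apply, c, e, p, map_smul, hg, hf0, hf1, hf2, hf3, wedge_add_left, wedge_add_right,
    wedge_smul_left, wedge_smul_right, wedge_self, smul_add, smul_zero, zero_add, one_smul,
    smul_smul, and_self, and_true, true_and]
  refine ⟨⟨?_, ?_⟩, ?_⟩ <;> match_scalars <;> field_simp
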